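/- arXiv:1104.2492 — 3 statements merged into one kernel-verified Lean document; each statement's English description precedes it below -/
import Mathlib

section
/- Let S₂₁ be a symmetric n×n complex matrix, J = J_n(0) the nilpotent Jordan block. Then for every skew-symmetric n×n matrix B there exists a symmetric matrix S₂₁ with B = S₂₁ᵀ Jᵀ - J S₂₁; equivalently, the map S ↦ -SᵀJᵀ + JS from symmetric n×n matrices surjects onto skew-symmetric n×n matrices. -/
open Matrix

/-- The nilpotent Jordan block: 1's on the superdiagonal. -/
def JordanNil (n : ℕ) : Matrix (Fin n) (Fin n) ℂ :=
  Matrix.of fun i j => if (j : ℕ) = (i : ℕ) + 1 then 1 else 0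

/-- Every skew-symmetric matrix `B` can be written as `SᵀJᵀ - JS` with `S` symmetric;
equivalently, `S ↦ -SᵀJᵀ + JS` maps symmetric matrices onto skew-symmetric matrices. -/
theorem sym_to_skew_surjective (n : ℕ) (B : Matrix (Fin n) (Fin n) ℂ) (hB : Bᵀ = -B) :
    ∃ S : Matrix (Fin n) (Fin n) ℂ, Sᵀ = S ∧
      B = Sᵀ * (JordanNil n)ᵀ - JordanNil n * S := by
  classical
  -- ℕ-indexed version of `B`, zero out of range
  set β : ℕ → ℕ → ℂ := fun a b =>
    if h : a < n ∧ b < n then B ⟨a, h.1⟩ ⟨b, h.2⟩ else 0 with hβ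
  have βskew : ∀ a b, β b a = -β a b := by
    intro a b
    simp only [hβ]
    by_cases h : a < n ∧ b < n
    · rw [dif_pos ⟨h.2, h.1⟩, dif_pos h]
      have := congrFun (congrFun hB ⟨a, h.1⟩) ⟨b, h.2⟩
      simpa [Matrix.transpose_apply] using this
    · rw [dif_neg (by tauto), dif_neg h]; ring
  have βzero : ∀ a b, n ≤ a → β a b = 0 := by
    intro a b ha
    simp only [hβ]
    rw [dif_neg (by omega)]
  have βdiag : ∀ a, β a a = 0 := by
    intro a
    have h := βskew a a
    linear_combination h / 2
  -- key cancellation along an antidiagonal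
  have cancel : ∀ a b : ℕ, ∑ k ∈ Finset.Ico a b, β k (a + b - 1 - k) = 0 := by
    intro a b
    refine Finset.sum_involution (fun k _ => a + b - 1 - k) ?_ ?_
      (fun k hk => ?_) (fun k hk => ?_)
    · intro k hk
      simp only [Finset.mem_Ico] at hk
      have hcol : a + b - 1 - (a + b - 1 - k) = k := by omega
      rw [hcol, βskew]; ring
    · intro k hk hne hEq
      apply hne
      have h : a + b - 1 - k = k := hEq
      rw [h]
      exact βdiag _
    · simp only [Finset.mem_Ico] at hk ⊢; omega
    · show a + b - 1 - (a + b - 1 - k) = k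
      simp only [Finset.mem_Ico] at hk; omega
  -- the ℕ-indexed solution
  set Sf : ℕ → ℕ → ℂ := fun i j => ∑ k ∈ Finset.Ico i (i + j), β k (i + j - 1 - k) with hSf
  have Sfzero : ∀ i j, n ≤ i → Sf i j = 0 := by
    intro i j hi
    refine Finset.sum_eq_zero fun k hk => ?_
    simp only [Finset.mem_Ico] at hk
    exact βzero _ _ (by omega)
  have Ssymm : ∀ i j : ℕ, Sf i j = Sf j i := by
    have key : ∀ i j : ℕ, i ≤ j → Sf i j = Sf j i := by
      intro i j hij
      simp only [hSf]
      rw [show j + i = i + j by ring]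
      rw [← Finset.sum_Ico_consecutive (fun k => β k (i + j - 1 - k)) hij
        (by omega : j ≤ i + j)]
      rw [cancel i j, zero_add]
    intro i j
    rcases le_total i j with h | h
    · exact key i j h
    · exact (key j i h).symm
  have main : ∀ i j : ℕ, Sf (j + 1) i - Sf (i + 1) j = β i j := by
    have key : ∀ i j : ℕ, i ≤ j → Sf (j + 1) i - Sf (i + 1) j = β i j := by
      intro i j hij
      rcases eq_or_lt_of_le hij with rfl | hlt
      · rw [βdiag]; ring
      · simp only [hSf]
        rw [show j + 1 + i = i + 1 + j by ring]
        rw [← Finset.sum_Ico_consecutive (fun k => β k (i + 1 + j - 1 - k))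
          (by omega : i + 1 ≤ j + 1) (by omega : j + 1 ≤ i + 1 + j)]
        rw [Finset.sum_Ico_succ_top (by omega : i + 1 ≤ j)]
        have h0 : ∑ k ∈ Finset.Ico (i + 1) j, β k (i + 1 + j - 1 - k) = 0 := by
          have h := cancel (i + 1) j
          have : ∀ k, (i + 1) + j - 1 - k = i + 1 + j - 1 - k := fun k => rfl
          simpa using h
        rw [h0]
        have hcol : i + 1 + j - 1 - j = i := by omega
        rw [hcol]
        have := βskew i j
        linear_combination -this
    intro i j
    rcases le_total i j with h | h
    · exact key i j h
    · have h1 := key j i h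
      have h2 := βskew i j
      linear_combination -h1 - h2
  -- selecting a single term from a Fin-indexed sum
  have pick : ∀ (f : ℕ → ℂ) (m : ℕ), (∀ a, n ≤ a → f a = 0) →
      (∑ k : Fin n, if (k : ℕ) = m then f k else 0) = f m := by
    intro f m hf
    rw [Fin.sum_univ_eq_sum_range (fun k => if k = m then f k else 0)]
    rw [Finset.sum_ite_eq' (Finset.range n) m f]
    by_cases h : m ∈ Finset.range n
    · rw [if_pos h]
    · rw [if_neg h]
      exact (hf m (by simpa using h)).symm
  refine ⟨Matrix.of fun i j => Sf i j, ?_, ?_⟩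
  · ext i j
    exact Ssymm j i
  · ext i j
    have h1 : (Matrix.of fun i j : Fin n => Sf (i : ℕ) (j : ℕ))ᵀ * (JordanNil n)ᵀ =
        Matrix.of fun i j : Fin n => Sf ((j : ℕ) + 1) (i : ℕ) := by
      ext a b
      simp only [Matrix.mul_apply, Matrix.transpose_apply, Matrix.of_apply, JordanNil]
      rw [show (∑ k : Fin n, Sf (k : ℕ) (a : ℕ) * if (k : ℕ) = (b : ℕ) + 1 then 1 else 0)
          = ∑ k : Fin n, if (k : ℕ) = (b : ℕ) + 1 then Sf (k : ℕ) (a : ℕ) else 0 by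
        refine Finset.sum_congr rfl fun k _ => ?_
        split <;> simp]
      exact pick (fun m => Sf m (a : ℕ)) ((b : ℕ) + 1) (fun m hm => Sfzero m _ hm)
    have h2 : JordanNil n * (Matrix.of fun i j : Fin n => Sf (i : ℕ) (j : ℕ)) =
        Matrix.of fun i j : Fin n => Sf ((i : ℕ) + 1) (j : ℕ) := by
      ext a b
      simp only [Matrix.mul_apply, Matrix.transpose_apply, Matrix.of_apply, JordanNil]
      rw [show (∑ k : Fin n, (if (k : ℕ) = (a : ℕ) + 1 then (1 : ℂ) else 0) * Sf (k : ℕ) (b : ℕ))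
          = ∑ k : Fin n, if (k : ℕ) = (a : ℕ) + 1 then Sf (k : ℕ) (b : ℕ) else 0 by
        refine Finset.sum_congr rfl fun k _ => ?_
        split <;> simp]
      exact pick (fun m => Sf m (b : ℕ)) ((a : ℕ) + 1) (fun m hm => Sfzero m _ hm)
    rw [Matrix.sub_apply, h1, h2]
    simp only [Matrix.of_apply]
    rw [main]
    simp only [hβ]
    rw [dif_pos ⟨i.isLt, j.isLt⟩]
end

section
/- Let J = J_n(0) be the nilpotent n×n Jordan block. The image of the linear map T ↦ -T·J + J·T on ℂ^{n×n} together with the span of the elementary matrices E_{i,n} and E_{n,j} (last column and last row) equals all of ℂ^{n×n}. Equivalently, every n×n matrix B can be written as B = -TJ + JT + L where L is supported on the last row, or alternatively where L is supported on the first column. -/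
open Matrix

section Aux

variable {n : ℕ}

/-- Extension of a matrix to a function on `ℕ × ℕ`, zero outside the range. -/
noncomputable def bext (B : Matrix (Fin n) (Fin n) ℂ) (i j : ℕ) : ℂ :=
  if h : i < n ∧ j < n then B ⟨i, h.1⟩ ⟨j, h.2⟩ else 0

lemma bext_apply (B : Matrix (Fin n) (Fin n) ℂ) (i j : Fin n) :
    bext B i j = B i j := by
  simp [bext, i.isLt, j.isLt]

lemma Jmul (f : ℕ → ℕ → ℂ) (i j : Fin n) :
    (JordanNil n * Matrix.of (fun a b : Fin n => f a b)) i j =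
      if h : (i : ℕ) + 1 < n then f ((i : ℕ) + 1) j else 0 := by
  rw [Matrix.mul_apply]
  split_ifs with h
  · rw [Finset.sum_eq_single (⟨(i : ℕ) + 1, h⟩ : Fin n)]
    · simp [JordanNil]
    · intro k _ hk
      simp only [JordanNil, of_apply]
      rw [if_neg, zero_mul]
      intro hc; exact hk (Fin.ext hc)
    · simp
  · apply Finset.sum_eq_zero
    intro k _
    simp only [JordanNil, of_apply]
    rw [if_neg, zero_mul]
    intro hc
    have := k.isLt
    omega

lemma mulJ (f : ℕ → ℕ → ℂ) (i j : Fin n) :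
    (Matrix.of (fun a b : Fin n => f a b) * JordanNil n) i j =
      if 0 < (j : ℕ) then f i ((j : ℕ) - 1) else 0 := by
  rw [Matrix.mul_apply]
  split_ifs with h
  · have hjn : (j : ℕ) - 1 < n := by have := j.isLt; omega
    rw [Finset.sum_eq_single (⟨(j : ℕ) - 1, hjn⟩ : Fin n)]
    · simp only [JordanNil, of_apply]
      rw [if_pos (show (j : ℕ) = ((⟨(j : ℕ) - 1, hjn⟩ : Fin n) : ℕ) + 1 by simp only [Fin.val_mk]; omega), mul_one]
    · intro k _ hk
      simp only [JordanNil, of_apply]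
      rw [if_neg, mul_zero]
      intro hc
      apply hk
      apply Fin.ext
      simp only [Fin.val_mk]
      omega
    · simp
  · apply Finset.sum_eq_zero
    intro k _
    simp only [JordanNil, of_apply]
    rw [if_neg, mul_zero]
    omega

end Aux

/-- Every `n×n` matrix `B` equals `-TJ + JT + L` with `L` supported on the last row,
and alternatively with `L` supported on the first column. -/
theorem commutator_plus_last_row (n : ℕ) (B : Matrix (Fin n) (Fin n) ℂ) :
    (∃ (T L : Matrix (Fin n) (Fin n) ℂ),
      (∀ i j, L i j ≠ 0 → (i : ℕ) = n - 1) ∧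
      B = -(T * JordanNil n) + JordanNil n * T + L) ∧
    (∃ (T L : Matrix (Fin n) (Fin n) ℂ),
      (∀ i j, L i j ≠ 0 → (j : ℕ) = 0) ∧
      B = -(T * JordanNil n) + JordanNil n * T + L) := by
  constructor
  · -- last row version
    set f : ℕ → ℕ → ℂ :=
      fun i j => ∑ t ∈ Finset.range (min i (j + 1)), bext B (i - 1 - t) (j - t) with hf
    set T : Matrix (Fin n) (Fin n) ℂ := Matrix.of (fun a b : Fin n => f a b) with hT
    refine ⟨T, B + T * JordanNil n - JordanNil n * T, ?_, by abel⟩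
    intro i j hL
    by_contra hi
    apply hL
    have hin : (i : ℕ) + 1 < n := by have := i.isLt; omega
    simp only [Matrix.sub_apply, Matrix.add_apply, hT]
    rw [Jmul, mulJ, dif_pos hin]
    have key : f ((i : ℕ) + 1) j
        = B i j + (if 0 < (j : ℕ) then f (i : ℕ) ((j : ℕ) - 1) else 0) := by
      simp only [hf]
      have hmin : min ((i : ℕ) + 1) ((j : ℕ) + 1) = min (i : ℕ) (j : ℕ) + 1 := by omega
      rw [hmin, Finset.sum_range_succ']
      have h0 : bext B ((i : ℕ) + 1 - 1 - 0) ((j : ℕ) - 0) = B i j := by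
        simpa using bext_apply B i j
      rw [h0]
      rw [add_comm]
      congr 1
      split_ifs with hj
      · have hmin2 : min (i : ℕ) ((j : ℕ) - 1 + 1) = min (i : ℕ) (j : ℕ) := by omega
        rw [hmin2]
        apply Finset.sum_congr rfl
        intro t ht
        congr 1 <;> omega
      · have hj0 : (j : ℕ) = 0 := by omega
        have : min (i : ℕ) (j : ℕ) = 0 := by omega
        rw [this]
        simp
    rw [key]
    ring
  · -- first column version
    set f : ℕ → ℕ → ℂ :=
      fun i j => -∑ t ∈ Finset.range n, bext B (i + t) (j + 1 + t) with hf
    set T : Matrix (Fin n) (Fin n) ℂ := Matrix.of (fun a b : Fin n => f a b) with hT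
    refine ⟨T, B + T * JordanNil n - JordanNil n * T, ?_, by abel⟩
    intro i j hL
    by_contra hj
    apply hL
    have hj1 : 0 < (j : ℕ) := by omega
    have hn : 0 < n := i.pos
    simp only [Matrix.sub_apply, Matrix.add_apply, hT]
    rw [Jmul, mulJ, if_pos hj1]
    have hzero : ∀ m : ℕ, n ≤ m → ∀ k, f m k = 0 := by
      intro m hm k
      simp only [hf]
      rw [neg_eq_zero]
      apply Finset.sum_eq_zero
      intro t _
      rw [bext, dif_neg]
      omega
    have key : f ((i : ℕ) + 1) j = B i j + f (i : ℕ) ((j : ℕ) - 1) := by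
      simp only [hf]
      have hstep : ∀ t, (i : ℕ) + t + ((j : ℕ) - 1 + 1 + t) = (i : ℕ) + t + ((j : ℕ) + t) := by
        intro t; omega
      have hL1 : (∑ t ∈ Finset.range n, bext B ((i : ℕ) + t) ((j : ℕ) - 1 + 1 + t))
          = ∑ t ∈ Finset.range n, bext B ((i : ℕ) + t) ((j : ℕ) + t) := by
        apply Finset.sum_congr rfl
        intro t _
        congr 1
        omega
      rw [hL1]
      obtain ⟨m, rfl⟩ : ∃ m, n = m + 1 := ⟨n - 1, by omega⟩
      have hlast : bext B ((i : ℕ) + 1 + m) ((j : ℕ) + 1 + m) = 0 := by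
        rw [bext, dif_neg]
        have := i.isLt
        omega
      have e1 : (∑ t ∈ Finset.range (m + 1), bext B ((i : ℕ) + t) ((j : ℕ) + t))
          = B i j + ∑ t ∈ Finset.range m, bext B ((i : ℕ) + 1 + t) ((j : ℕ) + 1 + t) := by
        rw [Finset.sum_range_succ']
        have h0 : bext B ((i : ℕ) + 0) ((j : ℕ) + 0) = B i j := by
          simpa using bext_apply B i j
        rw [h0]
        rw [add_comm]
        congr 1
        apply Finset.sum_congr rfl
        intro t _
        congr 1 <;> omega
      have e2 : (∑ t ∈ Finset.range (m + 1), bext B ((i : ℕ) + 1 + t) ((j : ℕ) + 1 + t))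
          = ∑ t ∈ Finset.range m, bext B ((i : ℕ) + 1 + t) ((j : ℕ) + 1 + t) := by
        rw [Finset.sum_range_succ, hlast, add_zero]
      rw [e1, e2]
      ring
    split_ifs with hin
    · rw [key]; ring
    · rw [hzero ((i : ℕ) + 1) (by omega) j] at key
      rw [← key]
      ring
end

section
/- The congruence orbit of the pair L_n = ( [[0,F_n],[-F_nᵀ,0]], [[0,G_n],[-G_nᵀ,0]] ) is open in its ambient space: the tangent space T(A,B) = {(CᵀA+AC, CᵀB+BC) : C ∈ ℂ^{(2n+1)×(2n+1)}} equals the entire space of pairs of skew-symmetric (2n+1)×(2n+1) complex matrices. Hence the miniversal deformation of L_n has zero parameters. -/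
open Matrix

/-- `F_n = [I_n | 0]`, the `n×(n+1)` matrix with `(i,i)` entries `1`. -/
def Fmat (n : ℕ) : Matrix (Fin n) (Fin (n + 1)) ℂ :=
  Matrix.of fun i j => if (j : ℕ) = (i : ℕ) then 1 else 0

/-- `G_n = [0 | I_n]`, the `n×(n+1)` matrix with `(i,i+1)` entries `1`. -/
def Gmat (n : ℕ) : Matrix (Fin n) (Fin (n + 1)) ℂ :=
  Matrix.of fun i j => if (j : ℕ) = (i : ℕ) + 1 then 1 else 0

/-- The canonical pair `L_n` of skew-symmetric `(2n+1)×(2n+1)` matrices. -/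
noncomputable def Lpair (n : ℕ) :
    Matrix (Fin n ⊕ Fin (n + 1)) (Fin n ⊕ Fin (n + 1)) ℂ ×
    Matrix (Fin n ⊕ Fin (n + 1)) (Fin n ⊕ Fin (n + 1)) ℂ :=
  (Matrix.fromBlocks 0 (Fmat n) (-(Fmat n)ᵀ) 0,
   Matrix.fromBlocks 0 (Gmat n) (-(Gmat n)ᵀ) 0)

namespace LnAux

/-! ### Solution of `X F + F Y = M`, `X G + G Y = N` -/

/-- lower/diagonal part of `X` (defined for `c ≤ r`). -/
def xlow (M N : ℕ → ℕ → ℂ) : ℕ → ℕ → ℂ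
  | 0, _ => 0
  | (r+1), c => if c = 0 then M (r+1) 0 - N r 0 else M (r+1) c - N r c + xlow M N r (c-1)

/-- strictly upper part of `X`: `xup M N n k r = X r (n-1-k)`. -/
def xup (M N : ℕ → ℕ → ℂ) (n : ℕ) : ℕ → ℕ → ℂ
  | 0, r => N r n - M (r+1) n
  | (k+1), r => xup M N n k (r+1) - M (r+1) (n-1-k) + N r (n-1-k)

def xfun (M N : ℕ → ℕ → ℂ) (n : ℕ) (r c : ℕ) : ℂ :=
  if c ≤ r then xlow M N r c else xup M N n (n-1-c) r

def yfun (M N : ℕ → ℕ → ℂ) (n : ℕ) (i j : ℕ) : ℂ :=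
  if i < n then M i j - (if j < n then xfun M N n i j else 0)
  else N (n-1) j - (if 1 ≤ j then xfun M N n (n-1) (j-1) else 0)

section X
variable (M N : ℕ → ℕ → ℂ) (n : ℕ)

lemma xB0 (i : ℕ) : xfun M N n (i+1) 0 = M (i+1) 0 - N i 0 := by
  simp [xfun, xlow]

lemma xB1 (i j : ℕ) (h1 : 1 ≤ j) (h2 : j ≤ n - 1) :
    xfun M N n (i+1) j = M (i+1) j - N i j + xfun M N n i (j-1) := by
  rcases le_or_gt j (i+1) with h | h
  · rw [xfun, if_pos h, xfun, if_pos (by omega)]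
    rw [xlow, if_neg (by omega)]
  · rw [xfun, if_neg (by omega), xfun, if_neg (by omega)]
    have e1 : n - 1 - (j - 1) = (n - 1 - j) + 1 := by omega
    rw [e1, xup]
    have e2 : n - 1 - (n - 1 - j) = j := by omega
    rw [e2]
    ring

lemma xB2 (i : ℕ) (h : i + 1 ≤ n - 1) :
    xfun M N n i (n-1) = N i n - M (i+1) n := by
  rw [xfun, if_neg (by omega)]
  have : n - 1 - (n - 1) = 0 := by omega
  rw [this, xup]

lemma yEqM (i j : ℕ) (hi : i < n) :
    yfun M N n i j = M i j - (if j < n then xfun M N n i j else 0) := by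
  rw [yfun, if_pos hi]

lemma yEqN (i j : ℕ) (hi : i < n) (hj : j ≤ n) :
    (if 1 ≤ j then xfun M N n i (j-1) else 0) + yfun M N n (i+1) j = N i j := by
  rcases eq_or_lt_of_le (Nat.succ_le_of_lt hi) with h | h
  · rw [yfun, if_neg (show ¬ (i+1 < n) by omega),
      show n - 1 = i by omega]
    ring
  · rw [yfun, if_pos h]
    rcases Nat.eq_zero_or_pos j with rfl | hj1
    · rw [if_neg (by omega), if_pos (show (0:ℕ) < n by omega), xB0 M N n i]
      ring
    · rcases eq_or_lt_of_le hj with rfl | hjn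
      · rw [if_pos (show 1 ≤ j by omega), if_neg (lt_irrefl j), xB2 M N j i (by omega)]
        ring
      · rw [if_pos (show 1 ≤ j by omega), if_pos hjn, xB1 M N n i j hj1 (by omega)]
        ring

end X


/-! ### Solution of the square skew problem (`Z` block) -/

def ufun (p q : ℕ → ℕ → ℂ) (i j : ℕ) : ℂ :=
  if h1 : i = j then 0
  else if h2 : j = i + 1 then 0
  else if h3 : i = j + 1 then p i j
  else if h4 : j < i then q (i-1) j + ufun p q (j+1) (i-1)
  else ufun p q j i - p j i
termination_by 2 * (max i j - min i j) + (if i < j then 1 else 0)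
decreasing_by
  · simp only [max_def, min_def]
    exact (by (repeat' split) <;> omega)
  · simp only [max_def, min_def]
    exact (by (repeat' split) <;> omega)

section U
variable (p q : ℕ → ℕ → ℂ)

lemma skew_diag {p : ℕ → ℕ → ℂ} (hp : ∀ a b, p b a = - p a b) (a : ℕ) :
    p a a = 0 := by
  have := hp a a
  linear_combination (1/2 : ℂ) * this

lemma uP (i j : ℕ) (h : j < i) : ufun p q i j - ufun p q j i = p i j := by
  have h5 : ufun p q j i = ufun p q i j - p i j := by
    rcases eq_or_lt_of_le (Nat.succ_le_of_lt h) with h1 | h1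
    · -- i = j + 1
      rw [ufun, dif_neg (by omega), dif_pos (by omega)]
      rw [show i = j + 1 by omega]
      rw [ufun, dif_neg (by omega), dif_neg (by omega), dif_pos rfl]
      ring
    · -- i > j + 1
      rw [ufun, dif_neg (by omega), dif_neg (by omega), dif_neg (by omega),
        dif_neg (by omega)]
  rw [h5]; ring

lemma uQ (a b : ℕ) (h : b < a) : ufun p q (a+1) b - ufun p q (b+1) a = q a b := by
  conv_lhs => rw [ufun]
  rw [dif_neg (by omega), dif_neg (by omega), dif_neg (by omega), dif_pos (by omega)]
  simp only [Nat.add_sub_cancel]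
  ring

end U

def zfun (p q : ℕ → ℕ → ℂ) (n : ℕ) (i j : ℕ) : ℂ :=
  if i ≤ n - 1 then ufun p q i j
  else if j = n - 1 then 0 else q (n-1) j + ufun p q (j+1) (n-1)

section Z
variable (p q : ℕ → ℕ → ℂ) (n : ℕ)
variable (hp : ∀ a b, p b a = - p a b) (hq : ∀ a b, q b a = - q a b)

include hp in
lemma zP (i j : ℕ) (hi : i < n) (hj : j < n) :
    zfun p q n i j - zfun p q n j i = p i j := by
  rw [zfun, if_pos (by omega), zfun, if_pos (by omega)]
  rcases lt_trichotomy j i with h | h | h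
  · exact uP p q i j h
  · subst h
    rw [show ufun p q j j - ufun p q j j = 0 by ring, skew_diag hp]
  · have h1 := uP p q j i h
    have h2 := hp j i
    linear_combination -h1 - h2
  
include hq in
lemma zQ (i j : ℕ) (hi : i < n) (hj : j < n) :
    zfun p q n (i+1) j - zfun p q n (j+1) i = q i j := by
  rcases lt_or_ge (i+1) n with hi1 | hi1 <;> rcases lt_or_ge (j+1) n with hj1 | hj1
  · rw [zfun, if_pos (by omega), zfun, if_pos (by omega)]
    rcases lt_trichotomy j i with h | h | h
    · exact uQ p q i j h
    · subst h
      rw [show ufun p q (j+1) j - ufun p q (j+1) j = 0 by ring, skew_diag hq]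
    · have h1 := uQ p q j i h
      have h2 := hq j i
      linear_combination -h1 - h2
  · -- j + 1 = n, i + 1 < n
    rw [zfun, if_pos (by omega), zfun, if_neg (by omega), if_neg (by omega),
      show n - 1 = j by omega, hq j i]
    ring
  · -- i + 1 = n, j + 1 < n
    rw [zfun, if_neg (by omega), if_neg (by omega), zfun, if_pos (by omega),
      show n - 1 = i by omega]
    ring
  · -- both = n
    have h : i = j := by omega
    subst h
    rw [show zfun p q n (i+1) i - zfun p q n (i+1) i = 0 by ring, skew_diag hq]

end Z

/-! ### Solution of the `W` block -/

def wfun (p q : ℕ → ℕ → ℂ) (n : ℕ) (r c : ℕ) : ℂ :=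
  if h1 : c ≤ r then
    (if h2 : c = 0 then q 0 (r+1) else q c (r+1) + wfun p q n (c-1) (r+1))
  else (if h3 : n ≤ c then - p r c else wfun p q n c r - p r c)
termination_by if c ≤ r then 2 * c else 2 * r + 1
decreasing_by
  · exact (by (repeat' split) <;> omega)
  · exact (by (repeat' split) <;> omega)

section W
variable (p q : ℕ → ℕ → ℂ) (n : ℕ)

lemma wP1 (i j : ℕ) (hij : i < j) (hjn : j < n) :
    wfun p q n i j = wfun p q n j i - p i j := by
  rw [wfun, dif_neg (by omega), dif_neg (by omega)]

lemma wP2 (i c : ℕ) (h1 : n ≤ c) (h2 : i < c) :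
    wfun p q n i c = - p i c := by
  rw [wfun, dif_neg (by omega), dif_pos h1]

lemma wQ1 (i j : ℕ) (h0 : 1 ≤ i) (hij : i < j) :
    wfun p q n (j-1) i = q i j + wfun p q n (i-1) j := by
  rw [wfun, dif_pos (by omega), dif_neg (by omega),
    show j - 1 + 1 = j by omega]

lemma wQ0 (j : ℕ) (h : 1 ≤ j) : wfun p q n (j-1) 0 = q 0 j := by
  rw [wfun, dif_pos (by omega), dif_pos rfl, show j - 1 + 1 = j by omega]

end W


/-! ### Delta sums -/

lemma sumS1 {m : ℕ} (f : Fin m → ℂ) (t : ℕ) (ht : t < m) :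
    (∑ k : Fin m, if (k : ℕ) = t then f k else 0) = f ⟨t, ht⟩ := by
  rw [Finset.sum_eq_single (⟨t, ht⟩ : Fin m)]
  · simp
  · intro b _ hb
    rw [if_neg (by simpa [Fin.ext_iff] using hb)]
  · simp

lemma sumS2 {m : ℕ} (f : Fin m → ℂ) (t : ℕ) (ht : t < m) :
    (∑ k : Fin m, if t = (k : ℕ) then f k else 0) = f ⟨t, ht⟩ := by
  rw [← sumS1 f t ht]
  apply Finset.sum_congr rfl
  intro k _
  by_cases h : (k : ℕ) = t
  · rw [if_pos h, if_pos h.symm]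
  · rw [if_neg h, if_neg (fun h2 => h h2.symm)]

lemma sumS2' {m : ℕ} (f : Fin m → ℂ) (t : ℕ) (ht : m ≤ t) :
    (∑ k : Fin m, if t = (k : ℕ) then f k else 0) = 0 := by
  apply Finset.sum_eq_zero
  intro k _
  rw [if_neg (by have := k.isLt; omega)]

lemma sumS3 {m : ℕ} (f : Fin m → ℂ) (t : ℕ) (h1 : 1 ≤ t) (h2 : t - 1 < m) :
    (∑ k : Fin m, if t = (k : ℕ) + 1 then f k else 0) = f ⟨t - 1, h2⟩ := by
  rw [← sumS1 f (t-1) h2]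
  apply Finset.sum_congr rfl
  intro k _
  by_cases h : (k : ℕ) = t - 1
  · rw [if_pos h, if_pos (by omega)]
  · rw [if_neg h, if_neg (by omega)]

lemma sumS3' {m : ℕ} (f : Fin m → ℂ) (t : ℕ) (h : t = 0) :
    (∑ k : Fin m, if t = (k : ℕ) + 1 then f k else 0) = 0 := by
  apply Finset.sum_eq_zero
  intro k _
  rw [if_neg (by omega)]

/-! ### full-range skew lemmas for `w` -/

section Wfull
variable (p q : ℕ → ℕ → ℂ) (n : ℕ)

lemma wP (hp : ∀ a b, p b a = - p a b) (a b : ℕ) (ha : a ≤ n) (hb : b ≤ n) :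
    (if b < n then wfun p q n b a else 0) - (if a < n then wfun p q n a b else 0) = p a b := by
  have key : ∀ a b : ℕ, a < b → b ≤ n →
      (if b < n then wfun p q n b a else 0) - (if a < n then wfun p q n a b else 0) = p a b := by
    intro a b hab hbn
    rcases lt_or_eq_of_le hbn with h | h
    · rw [if_pos h, if_pos (by omega), wP1 p q n a b hab h]
      ring
    · subst h
      rw [if_neg (lt_irrefl b), if_pos (by omega), wP2 p q b a b le_rfl hab]
      ring
  rcases lt_trichotomy a b with h | h | h
  · exact key a b h hb
  · subst h
    rcases lt_or_ge a n with h2 | h2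
    · rw [if_pos h2, skew_diag hp]
      ring
    · rw [if_neg (by omega), skew_diag hp]
      ring
  · have := key b a h ha
    have h2 := hp b a
    linear_combination -this - h2

lemma wQ (hq : ∀ a b, q b a = - q a b) (a b : ℕ) (ha : a ≤ n) (hb : b ≤ n) :
    (if 1 ≤ b then wfun p q n (b-1) a else 0) - (if 1 ≤ a then wfun p q n (a-1) b else 0)
      = q a b := by
  have key : ∀ a b : ℕ, a < b →
      (if 1 ≤ b then wfun p q n (b-1) a else 0) - (if 1 ≤ a then wfun p q n (a-1) b else 0)
        = q a b := by
    intro a b hab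
    rcases Nat.eq_zero_or_pos a with rfl | ha1
    · rw [if_pos (by omega), if_neg (by omega), wQ0 p q n b (by omega)]
      ring
    · rw [if_pos (by omega), if_pos (show 1 ≤ a by omega), wQ1 p q n a b ha1 hab]
      ring
  rcases lt_trichotomy a b with h | h | h
  · exact key a b h
  · subst h
    rw [skew_diag hq]
    ring
  · have := key b a h
    have h2 := hq b a
    linear_combination -this - h2

end Wfull

end LnAux

/-- The tangent space to the congruence orbit of `L_n` is the whole space of pairs of
skew-symmetric `(2n+1)×(2n+1)` matrices: the miniversal deformation of `L_n` has no
parameters. -/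
theorem Ln_orbit_open (n : ℕ)
    (P Q : Matrix (Fin n ⊕ Fin (n + 1)) (Fin n ⊕ Fin (n + 1)) ℂ)
    (hP : Pᵀ = -P) (hQ : Qᵀ = -Q) :
    ∃ C : Matrix (Fin n ⊕ Fin (n + 1)) (Fin n ⊕ Fin (n + 1)) ℂ,
      P = Cᵀ * (Lpair n).1 + (Lpair n).1 * C ∧
      Q = Cᵀ * (Lpair n).2 + (Lpair n).2 * C := by
  classical
  have hPs : ∀ i j, P j i = - P i j := fun i j => by
    have := congrFun (congrFun hP i) j
    simpa using this
  have hQs : ∀ i j, Q j i = - Q i j := fun i j => by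
    have := congrFun (congrFun hQ i) j
    simpa using this
  set M0 : ℕ → ℕ → ℂ := fun a b =>
    if h : a < n ∧ b < n + 1 then P (Sum.inl ⟨a, h.1⟩) (Sum.inr ⟨b, h.2⟩) else 0 with hM0
  set N0 : ℕ → ℕ → ℂ := fun a b =>
    if h : a < n ∧ b < n + 1 then Q (Sum.inl ⟨a, h.1⟩) (Sum.inr ⟨b, h.2⟩) else 0 with hN0
  set p0 : ℕ → ℕ → ℂ := fun a b =>
    if h : a < n ∧ b < n then P (Sum.inl ⟨a, h.1⟩) (Sum.inl ⟨b, h.2⟩) else 0 with hp0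
  set q0 : ℕ → ℕ → ℂ := fun a b =>
    if h : a < n ∧ b < n then Q (Sum.inl ⟨a, h.1⟩) (Sum.inl ⟨b, h.2⟩) else 0 with hq0
  set r0 : ℕ → ℕ → ℂ := fun a b =>
    if h : a < n + 1 ∧ b < n + 1 then P (Sum.inr ⟨a, h.1⟩) (Sum.inr ⟨b, h.2⟩) else 0 with hr0
  set s0 : ℕ → ℕ → ℂ := fun a b =>
    if h : a < n + 1 ∧ b < n + 1 then Q (Sum.inr ⟨a, h.1⟩) (Sum.inr ⟨b, h.2⟩) else 0 with hs0
  have skew_aux : ∀ (R : Matrix (Fin n ⊕ Fin (n+1)) (Fin n ⊕ Fin (n+1)) ℂ),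
      (∀ i j, R j i = - R i j) → ∀ a b : ℕ,
      (fun a b => if h : a < n ∧ b < n then R (Sum.inl ⟨a, h.1⟩) (Sum.inl ⟨b, h.2⟩) else 0) a b
      = - (fun a b => if h : a < n ∧ b < n then R (Sum.inl ⟨a, h.1⟩) (Sum.inl ⟨b, h.2⟩) else 0) b a := by
    intro R hR a b
    by_cases h : a < n ∧ b < n
    · have h' : b < n ∧ a < n := ⟨h.2, h.1⟩
      simp only [dif_pos h, dif_pos h']
      exact hR _ _
    · have h' : ¬ (b < n ∧ a < n) := fun h2 => h ⟨h2.2, h2.1⟩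
      simp only [dif_neg h, dif_neg h', neg_zero]
  have skew_aux2 : ∀ (R : Matrix (Fin n ⊕ Fin (n+1)) (Fin n ⊕ Fin (n+1)) ℂ),
      (∀ i j, R j i = - R i j) → ∀ a b : ℕ,
      (fun a b => if h : a < n+1 ∧ b < n+1 then R (Sum.inr ⟨a, h.1⟩) (Sum.inr ⟨b, h.2⟩) else 0) a b
      = - (fun a b => if h : a < n+1 ∧ b < n+1 then R (Sum.inr ⟨a, h.1⟩) (Sum.inr ⟨b, h.2⟩) else 0) b a := by
    intro R hR a b
    by_cases h : a < n+1 ∧ b < n+1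
    · have h' : b < n+1 ∧ a < n+1 := ⟨h.2, h.1⟩
      simp only [dif_pos h, dif_pos h']
      exact hR _ _
    · have h' : ¬ (b < n+1 ∧ a < n+1) := fun h2 => h ⟨h2.2, h2.1⟩
      simp only [dif_neg h, dif_neg h', neg_zero]
  have hp0s : ∀ a b, p0 b a = - p0 a b := fun a b => skew_aux P hPs b a
  have hq0s : ∀ a b, q0 b a = - q0 a b := fun a b => skew_aux Q hQs b a
  have hr0s : ∀ a b, r0 b a = - r0 a b := fun a b => skew_aux2 P hPs b a
  have hs0s : ∀ a b, s0 b a = - s0 a b := fun a b => skew_aux2 Q hQs b a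
  have hM0e : ∀ (a : Fin n) (b : Fin (n+1)), M0 (a:ℕ) (b:ℕ) = P (Sum.inl a) (Sum.inr b) := by
    intro a b
    rw [hM0]
    simp only
    rw [dif_pos (show (a:ℕ) < n ∧ (b:ℕ) < n+1 from ⟨a.isLt, b.isLt⟩)]
  have hN0e : ∀ (a : Fin n) (b : Fin (n+1)), N0 (a:ℕ) (b:ℕ) = Q (Sum.inl a) (Sum.inr b) := by
    intro a b
    rw [hN0]
    simp only
    rw [dif_pos (show (a:ℕ) < n ∧ (b:ℕ) < n+1 from ⟨a.isLt, b.isLt⟩)]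
  have hp0e : ∀ (a b : Fin n), p0 (a:ℕ) (b:ℕ) = P (Sum.inl a) (Sum.inl b) := by
    intro a b
    rw [hp0]
    simp only
    rw [dif_pos (show (a:ℕ) < n ∧ (b:ℕ) < n from ⟨a.isLt, b.isLt⟩)]
  have hq0e : ∀ (a b : Fin n), q0 (a:ℕ) (b:ℕ) = Q (Sum.inl a) (Sum.inl b) := by
    intro a b
    rw [hq0]
    simp only
    rw [dif_pos (show (a:ℕ) < n ∧ (b:ℕ) < n from ⟨a.isLt, b.isLt⟩)]
  have hr0e : ∀ (a b : Fin (n+1)), r0 (a:ℕ) (b:ℕ) = P (Sum.inr a) (Sum.inr b) := by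
    intro a b
    rw [hr0]
    simp only
    rw [dif_pos (show (a:ℕ) < n+1 ∧ (b:ℕ) < n+1 from ⟨a.isLt, b.isLt⟩)]
  have hs0e : ∀ (a b : Fin (n+1)), s0 (a:ℕ) (b:ℕ) = Q (Sum.inr a) (Sum.inr b) := by
    intro a b
    rw [hs0]
    simp only
    rw [dif_pos (show (a:ℕ) < n+1 ∧ (b:ℕ) < n+1 from ⟨a.isLt, b.isLt⟩)]
  refine ⟨Matrix.fromBlocks
      (Matrix.of fun i j => LnAux.xfun M0 N0 n (j : ℕ) (i : ℕ))
      (Matrix.of fun i j => LnAux.wfun r0 s0 n (i : ℕ) (j : ℕ))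
      (Matrix.of fun i j => LnAux.zfun p0 q0 n (i : ℕ) (j : ℕ))
      (Matrix.of fun i j => LnAux.yfun M0 N0 n (i : ℕ) (j : ℕ)), ?_, ?_⟩
  · ext i j
    rcases i with a | a <;> rcases j with b | b
    · -- (inl, inl)
      rw [Matrix.add_apply, Matrix.mul_apply, Matrix.mul_apply,
        Fintype.sum_sum_type, Fintype.sum_sum_type]
      simp only [Lpair, Matrix.fromBlocks_apply₁₁, Matrix.fromBlocks_apply₁₂,
        Matrix.fromBlocks_apply₂₁, Matrix.fromBlocks_apply₂₂, Matrix.transpose_apply,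
        Fmat, Gmat, Matrix.of_apply, Matrix.zero_apply, Matrix.neg_apply,
        mul_zero, zero_mul, mul_neg, neg_mul, mul_ite, ite_mul, mul_one, one_mul,
        neg_zero, Finset.sum_const_zero, add_zero, zero_add, Finset.sum_neg_distrib]
      rw [LnAux.sumS1 (fun k : Fin (n+1) => LnAux.zfun p0 q0 n (k : ℕ) (a : ℕ)) (b : ℕ) (by omega),
        LnAux.sumS1 (fun k : Fin (n+1) => LnAux.zfun p0 q0 n (k : ℕ) (b : ℕ)) (a : ℕ) (by omega)]
      simp only [Fin.val_mk]
      have hz := LnAux.zP p0 q0 n hp0s (a : ℕ) (b : ℕ) a.isLt b.isLt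
      linear_combination -hz - hp0e a b
    · -- (inl, inr)
      rw [Matrix.add_apply, Matrix.mul_apply, Matrix.mul_apply,
        Fintype.sum_sum_type, Fintype.sum_sum_type]
      simp only [Lpair, Matrix.fromBlocks_apply₁₁, Matrix.fromBlocks_apply₁₂,
        Matrix.fromBlocks_apply₂₁, Matrix.fromBlocks_apply₂₂, Matrix.transpose_apply,
        Fmat, Gmat, Matrix.of_apply, Matrix.zero_apply, Matrix.neg_apply,
        mul_zero, zero_mul, mul_neg, neg_mul, mul_ite, ite_mul, mul_one, one_mul,
        neg_zero, Finset.sum_const_zero, add_zero, zero_add, Finset.sum_neg_distrib]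
      rw [LnAux.sumS1 (fun k : Fin (n+1) => LnAux.yfun M0 N0 n (k : ℕ) (b : ℕ)) (a : ℕ) (by omega)]
      simp only [Fin.val_mk]
      have hy := LnAux.yEqM M0 N0 n (a:ℕ) (b:ℕ) a.isLt
      rcases lt_or_ge (b:ℕ) n with hb | hb
      · rw [LnAux.sumS2 (fun k : Fin n => LnAux.xfun M0 N0 n (a : ℕ) (k : ℕ)) (b : ℕ) hb]
        simp only [Fin.val_mk]
        rw [if_pos hb] at hy
        linear_combination - hy - hM0e a b
      · rw [LnAux.sumS2' (fun k : Fin n => LnAux.xfun M0 N0 n (a : ℕ) (k : ℕ)) (b : ℕ) hb]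
        rw [if_neg (by omega)] at hy
        linear_combination - hy - hM0e a b
    · -- (inr, inl)
      rw [Matrix.add_apply, Matrix.mul_apply, Matrix.mul_apply,
        Fintype.sum_sum_type, Fintype.sum_sum_type]
      simp only [Lpair, Matrix.fromBlocks_apply₁₁, Matrix.fromBlocks_apply₁₂,
        Matrix.fromBlocks_apply₂₁, Matrix.fromBlocks_apply₂₂, Matrix.transpose_apply,
        Fmat, Gmat, Matrix.of_apply, Matrix.zero_apply, Matrix.neg_apply,
        mul_zero, zero_mul, mul_neg, neg_mul, mul_ite, ite_mul, mul_one, one_mul,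
        neg_zero, Finset.sum_const_zero, add_zero, zero_add, Finset.sum_neg_distrib]
      rw [LnAux.sumS1 (fun k : Fin (n+1) => LnAux.yfun M0 N0 n (k : ℕ) (a : ℕ)) (b : ℕ) (by omega)]
      simp only [Fin.val_mk]
      have hy := LnAux.yEqM M0 N0 n (b:ℕ) (a:ℕ) b.isLt
      have hsk := hPs (Sum.inl b) (Sum.inr a)
      rcases lt_or_ge (a:ℕ) n with ha | ha
      · rw [LnAux.sumS2 (fun k : Fin n => LnAux.xfun M0 N0 n (b : ℕ) (k : ℕ)) (a : ℕ) ha]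
        simp only [Fin.val_mk]
        rw [if_pos ha] at hy
        linear_combination hsk + hy + hM0e b a
      · rw [LnAux.sumS2' (fun k : Fin n => LnAux.xfun M0 N0 n (b : ℕ) (k : ℕ)) (a : ℕ) ha]
        rw [if_neg (by omega)] at hy
        linear_combination hsk + hy + hM0e b a
    · -- (inr, inr)
      rw [Matrix.add_apply, Matrix.mul_apply, Matrix.mul_apply,
        Fintype.sum_sum_type, Fintype.sum_sum_type]
      simp only [Lpair, Matrix.fromBlocks_apply₁₁, Matrix.fromBlocks_apply₁₂,
        Matrix.fromBlocks_apply₂₁, Matrix.fromBlocks_apply₂₂, Matrix.transpose_apply,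
        Fmat, Gmat, Matrix.of_apply, Matrix.zero_apply, Matrix.neg_apply,
        mul_zero, zero_mul, mul_neg, neg_mul, mul_ite, ite_mul, mul_one, one_mul,
        neg_zero, Finset.sum_const_zero, add_zero, zero_add, Finset.sum_neg_distrib]
      have hw := LnAux.wP r0 s0 n hr0s (a : ℕ) (b : ℕ) (by omega) (by omega)
      rcases lt_or_ge (b:ℕ) n with hb | hb <;> rcases lt_or_ge (a:ℕ) n with ha | ha
      · rw [LnAux.sumS2 (fun k : Fin n => LnAux.wfun r0 s0 n (k : ℕ) (a : ℕ)) (b : ℕ) hb,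
          LnAux.sumS2 (fun k : Fin n => LnAux.wfun r0 s0 n (k : ℕ) (b : ℕ)) (a : ℕ) ha]
        simp only [Fin.val_mk]
        rw [if_pos hb, if_pos ha] at hw
        linear_combination -hw - hr0e a b
      · rw [LnAux.sumS2 (fun k : Fin n => LnAux.wfun r0 s0 n (k : ℕ) (a : ℕ)) (b : ℕ) hb,
          LnAux.sumS2' (fun k : Fin n => LnAux.wfun r0 s0 n (k : ℕ) (b : ℕ)) (a : ℕ) ha]
        simp only [Fin.val_mk]
        rw [if_pos hb, if_neg (by omega)] at hw
        linear_combination -hw - hr0e a b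
      · rw [LnAux.sumS2' (fun k : Fin n => LnAux.wfun r0 s0 n (k : ℕ) (a : ℕ)) (b : ℕ) hb,
          LnAux.sumS2 (fun k : Fin n => LnAux.wfun r0 s0 n (k : ℕ) (b : ℕ)) (a : ℕ) ha]
        simp only [Fin.val_mk]
        rw [if_neg (by omega), if_pos ha] at hw
        linear_combination -hw - hr0e a b
      · rw [LnAux.sumS2' (fun k : Fin n => LnAux.wfun r0 s0 n (k : ℕ) (a : ℕ)) (b : ℕ) hb,
          LnAux.sumS2' (fun k : Fin n => LnAux.wfun r0 s0 n (k : ℕ) (b : ℕ)) (a : ℕ) ha]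
        rw [if_neg (by omega), if_neg (by omega)] at hw
        linear_combination -hw - hr0e a b
  · ext i j
    rcases i with a | a <;> rcases j with b | b
    · -- (inl, inl) G
      rw [Matrix.add_apply, Matrix.mul_apply, Matrix.mul_apply,
        Fintype.sum_sum_type, Fintype.sum_sum_type]
      simp only [Lpair, Matrix.fromBlocks_apply₁₁, Matrix.fromBlocks_apply₁₂,
        Matrix.fromBlocks_apply₂₁, Matrix.fromBlocks_apply₂₂, Matrix.transpose_apply,
        Fmat, Gmat, Matrix.of_apply, Matrix.zero_apply, Matrix.neg_apply,
        mul_zero, zero_mul, mul_neg, neg_mul, mul_ite, ite_mul, mul_one, one_mul,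
        neg_zero, Finset.sum_const_zero, add_zero, zero_add, Finset.sum_neg_distrib]
      rw [LnAux.sumS1 (fun k : Fin (n+1) => LnAux.zfun p0 q0 n (k : ℕ) (a : ℕ)) ((b : ℕ)+1) (by omega),
        LnAux.sumS1 (fun k : Fin (n+1) => LnAux.zfun p0 q0 n (k : ℕ) (b : ℕ)) ((a : ℕ)+1) (by omega)]
      simp only [Fin.val_mk]
      have hz := LnAux.zQ p0 q0 n hq0s (a : ℕ) (b : ℕ) a.isLt b.isLt
      linear_combination -hz - hq0e a b
    · -- (inl, inr) G
      rw [Matrix.add_apply, Matrix.mul_apply, Matrix.mul_apply,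
        Fintype.sum_sum_type, Fintype.sum_sum_type]
      simp only [Lpair, Matrix.fromBlocks_apply₁₁, Matrix.fromBlocks_apply₁₂,
        Matrix.fromBlocks_apply₂₁, Matrix.fromBlocks_apply₂₂, Matrix.transpose_apply,
        Fmat, Gmat, Matrix.of_apply, Matrix.zero_apply, Matrix.neg_apply,
        mul_zero, zero_mul, mul_neg, neg_mul, mul_ite, ite_mul, mul_one, one_mul,
        neg_zero, Finset.sum_const_zero, add_zero, zero_add, Finset.sum_neg_distrib]
      rw [LnAux.sumS1 (fun k : Fin (n+1) => LnAux.yfun M0 N0 n (k : ℕ) (b : ℕ)) ((a : ℕ)+1) (by omega)]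
      simp only [Fin.val_mk]
      have hy := LnAux.yEqN M0 N0 n (a:ℕ) (b:ℕ) a.isLt (by omega)
      rcases Nat.eq_zero_or_pos (b:ℕ) with hb | hb
      · rw [LnAux.sumS3' (fun k : Fin n => LnAux.xfun M0 N0 n (a : ℕ) (k : ℕ)) (b : ℕ) hb]
        rw [if_neg (by omega)] at hy
        linear_combination - hy - hN0e a b
      · rw [LnAux.sumS3 (fun k : Fin n => LnAux.xfun M0 N0 n (a : ℕ) (k : ℕ)) (b : ℕ) hb (by omega)]
        simp only [Fin.val_mk]
        rw [if_pos (show 1 ≤ (b:ℕ) by omega)] at hy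
        linear_combination - hy - hN0e a b
    · -- (inr, inl) G
      rw [Matrix.add_apply, Matrix.mul_apply, Matrix.mul_apply,
        Fintype.sum_sum_type, Fintype.sum_sum_type]
      simp only [Lpair, Matrix.fromBlocks_apply₁₁, Matrix.fromBlocks_apply₁₂,
        Matrix.fromBlocks_apply₂₁, Matrix.fromBlocks_apply₂₂, Matrix.transpose_apply,
        Fmat, Gmat, Matrix.of_apply, Matrix.zero_apply, Matrix.neg_apply,
        mul_zero, zero_mul, mul_neg, neg_mul, mul_ite, ite_mul, mul_one, one_mul,
        neg_zero, Finset.sum_const_zero, add_zero, zero_add, Finset.sum_neg_distrib]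
      rw [LnAux.sumS1 (fun k : Fin (n+1) => LnAux.yfun M0 N0 n (k : ℕ) (a : ℕ)) ((b : ℕ)+1) (by omega)]
      simp only [Fin.val_mk]
      have hy := LnAux.yEqN M0 N0 n (b:ℕ) (a:ℕ) b.isLt (by omega)
      have hsk := hQs (Sum.inl b) (Sum.inr a)
      rcases Nat.eq_zero_or_pos (a:ℕ) with ha | ha
      · rw [LnAux.sumS3' (fun k : Fin n => LnAux.xfun M0 N0 n (b : ℕ) (k : ℕ)) (a : ℕ) ha]
        rw [if_neg (by omega)] at hy
        linear_combination hsk + hy + hN0e b a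
      · rw [LnAux.sumS3 (fun k : Fin n => LnAux.xfun M0 N0 n (b : ℕ) (k : ℕ)) (a : ℕ) ha (by omega)]
        simp only [Fin.val_mk]
        rw [if_pos (show 1 ≤ (a:ℕ) by omega)] at hy
        linear_combination hsk + hy + hN0e b a
    · -- (inr, inr) G
      rw [Matrix.add_apply, Matrix.mul_apply, Matrix.mul_apply,
        Fintype.sum_sum_type, Fintype.sum_sum_type]
      simp only [Lpair, Matrix.fromBlocks_apply₁₁, Matrix.fromBlocks_apply₁₂,
        Matrix.fromBlocks_apply₂₁, Matrix.fromBlocks_apply₂₂, Matrix.transpose_apply,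
        Fmat, Gmat, Matrix.of_apply, Matrix.zero_apply, Matrix.neg_apply,
        mul_zero, zero_mul, mul_neg, neg_mul, mul_ite, ite_mul, mul_one, one_mul,
        neg_zero, Finset.sum_const_zero, add_zero, zero_add, Finset.sum_neg_distrib]
      have hw := LnAux.wQ r0 s0 n hs0s (a : ℕ) (b : ℕ) (by omega) (by omega)
      rcases Nat.eq_zero_or_pos (b:ℕ) with hb | hb <;> rcases Nat.eq_zero_or_pos (a:ℕ) with ha | ha
      · rw [LnAux.sumS3' (fun k : Fin n => LnAux.wfun r0 s0 n (k : ℕ) (a : ℕ)) (b : ℕ) hb,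
          LnAux.sumS3' (fun k : Fin n => LnAux.wfun r0 s0 n (k : ℕ) (b : ℕ)) (a : ℕ) ha]
        rw [if_neg (by omega), if_neg (by omega)] at hw
        linear_combination -hw - hs0e a b
      · rw [LnAux.sumS3' (fun k : Fin n => LnAux.wfun r0 s0 n (k : ℕ) (a : ℕ)) (b : ℕ) hb,
          LnAux.sumS3 (fun k : Fin n => LnAux.wfun r0 s0 n (k : ℕ) (b : ℕ)) (a : ℕ) ha (by omega)]
        simp only [Fin.val_mk]
        rw [if_neg (by omega), if_pos (show 1 ≤ (a:ℕ) by omega)] at hw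
        linear_combination -hw - hs0e a b
      · rw [LnAux.sumS3 (fun k : Fin n => LnAux.wfun r0 s0 n (k : ℕ) (a : ℕ)) (b : ℕ) hb (by omega),
          LnAux.sumS3' (fun k : Fin n => LnAux.wfun r0 s0 n (k : ℕ) (b : ℕ)) (a : ℕ) ha]
        simp only [Fin.val_mk]
        rw [if_pos (show 1 ≤ (b:ℕ) by omega), if_neg (by omega)] at hw
        linear_combination -hw - hs0e a b
      · rw [LnAux.sumS3 (fun k : Fin n => LnAux.wfun r0 s0 n (k : ℕ) (a : ℕ)) (b : ℕ) hb (by omega),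
          LnAux.sumS3 (fun k : Fin n => LnAux.wfun r0 s0 n (k : ℕ) (b : ℕ)) (a : ℕ) ha (by omega)]
        simp only [Fin.val_mk]
        rw [if_pos (show 1 ≤ (b:ℕ) by omega), if_pos (show 1 ≤ (a:ℕ) by omega)] at hw
        linear_combination -hw - hs0e a b
end
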